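/- Let Ψ: ℝⁿ → ℂ be continuous with Re Ψ ≥ 0, and suppose there exist M > 0 and β ∈ (0,2] such that Re Ψ(ξ) ≥ ‖ξ‖^β whenever ‖ξ‖ > M. Then for every t > 0 the function ξ ↦ e^{−tΨ(ξ)} is integrable on ℝⁿ, and for every T > 0 there is a constant C > 0 such that the function p_t(x) := (2π)^{−n} ∫_{ℝⁿ} e^{−tΨ(ξ)} e^{−i⟨x,ξ⟩} dξ satisfies |p_t(x)| ≤ C t^{−n/β} for all t ∈ (0,T] and all x ∈ ℝⁿ. -/

import Mathlib

/-!
On the ball of radius `M` the integrand `|e^{-tΨ(ξ)}| = e^{-t Re Ψ(ξ)}` is at most `1`, outside it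
at most `e^{-t‖ξ‖^β}`, so `|p_t(x)| ≤ (2π)^{-n} (|B_M| + ∫ e^{-t‖ξ‖^β} dξ)`. The substitution
`ξ = t^{-1/β} η` turns the last integral into `t^{-n/β} ∫ e^{-‖η‖^β} dη`, and for `t ≤ T` the
volume term is absorbed as `|B_M| ≤ |B_M| T^{n/β} t^{-n/β}`.
-/

open MeasureTheory Complex Set

noncomputable section

/-- The transition density `p_t(x) = (2π)^{-n} ∫ e^{-tΨ(ξ)} e^{-i⟨x,ξ⟩} dξ`. -/
def transDensity (n : ℕ) (Ψ : EuclideanSpace ℝ (Fin n) → ℂ) (t : ℝ)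
    (x : EuclideanSpace ℝ (Fin n)) : ℂ :=
  (((2 * Real.pi) ^ n)⁻¹ : ℝ) *
    ∫ ξ : EuclideanSpace ℝ (Fin n),
      Complex.exp (-(t : ℂ) * Ψ ξ) * Complex.exp (-(Complex.I * ((inner ℝ x ξ : ℝ) : ℂ)))

theorem one_le_rpow_mul_rpow_neg {t T : ℝ} (ht : 0 < t) (htT : t ≤ T) {a : ℝ} (ha : 0 ≤ a) :
    1 ≤ T ^ a * t ^ (-a) := by
  rw [Real.rpow_neg ht.le, ← div_eq_mul_inv, ← Real.div_rpow (ht.le.trans htT) ht.le]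
  exact Real.one_le_rpow ((one_le_div ht).2 htT) ha

section RadialDecay

variable {E : Type*} [NormedAddCommGroup E] [NormedSpace ℝ E] {β : ℝ}

theorem mul_rpow_eq_norm_smul_rpow (hβ : β ≠ 0) {t : ℝ} (ht : 0 ≤ t) (x : E) :
    t * ‖x‖ ^ β = ‖t ^ β⁻¹ • x‖ ^ β := by
  rw [norm_smul, Real.norm_of_nonneg (by positivity), Real.mul_rpow (by positivity) (norm_nonneg x),
    ← Real.rpow_mul ht, inv_mul_cancel₀ hβ, Real.rpow_one]

variable [FiniteDimensional ℝ E] [MeasurableSpace E] [BorelSpace E] (μ : Measure E)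
  [μ.IsAddHaarMeasure]

theorem integrable_exp_neg_norm_rpow (hβ : 0 < β) :
    Integrable (fun x : E => Real.exp (-‖x‖ ^ β)) μ := by
  obtain hE | hE := subsingleton_or_nontrivial E
  · exact (integrable_const (Real.exp (-‖(0 : E)‖ ^ β))).congr
      (.of_forall fun x => by rw [Subsingleton.elim x 0])
  · rw [integrable_fun_norm_addHaar μ (f := fun y => Real.exp (-y ^ β))]
    refine (integrableOn_rpow_mul_exp_neg_rpow (s := (Module.finrank ℝ E - 1 : ℕ)) ?_ hβ).congr_fun
      (fun y _ => by simp [Real.rpow_natCast]) measurableSet_Ioi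
    exact neg_one_lt_zero.trans_le (Nat.cast_nonneg _)

theorem integrable_exp_neg_mul_norm_rpow (hβ : 0 < β) {t : ℝ} (ht : 0 < t) :
    Integrable (fun x : E => Real.exp (-(t * ‖x‖ ^ β))) μ := by
  simp_rw [mul_rpow_eq_norm_smul_rpow hβ.ne' ht.le]
  exact (integrable_exp_neg_norm_rpow μ hβ).comp_smul (by positivity)

theorem integral_exp_neg_mul_norm_rpow (hβ : β ≠ 0) {t : ℝ} (ht : 0 < t) :
    ∫ x : E, Real.exp (-(t * ‖x‖ ^ β)) ∂μ =
      t ^ (-(Module.finrank ℝ E / β)) * ∫ x : E, Real.exp (-‖x‖ ^ β) ∂μ := by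
  simp_rw [mul_rpow_eq_norm_smul_rpow hβ ht.le]
  rw [Measure.integral_comp_smul_of_nonneg μ (fun x => Real.exp (-‖x‖ ^ β)) _ (hR := by positivity),
    smul_eq_mul, ← Real.rpow_natCast, ← Real.rpow_mul ht.le, ← Real.rpow_neg ht.le]
  ring_nf

end RadialDecay

section Domination

variable {E : Type*} [NormedAddCommGroup E] {Ψ : E → ℂ} {M β t : ℝ}

theorem norm_cexp_neg_mul_le (hΨre : ∀ ξ, 0 ≤ (Ψ ξ).re)
    (hgrowth : ∀ ξ, M < ‖ξ‖ → ‖ξ‖ ^ β ≤ (Ψ ξ).re) (ht : 0 ≤ t) (ξ : E) :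
    ‖cexp (-(t : ℂ) * Ψ ξ)‖ ≤
      (Metric.closedBall 0 M).indicator 1 ξ + Real.exp (-(t * ‖ξ‖ ^ β)) := by
  have hnorm : ‖cexp (-(t : ℂ) * Ψ ξ)‖ = Real.exp (-(t * (Ψ ξ).re)) := by
    simp [Complex.norm_exp, Complex.mul_re]
  rw [hnorm]
  by_cases hξ : ‖ξ‖ ≤ M
  · have hmem : ξ ∈ Metric.closedBall 0 M := by simpa using hξ
    rw [indicator_of_mem hmem, Pi.one_apply]
    have : Real.exp (-(t * (Ψ ξ).re)) ≤ 1 :=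
      Real.exp_le_one_iff.2 (neg_nonpos.2 (mul_nonneg ht (hΨre ξ)))
    linarith [Real.exp_pos (-(t * ‖ξ‖ ^ β))]
  · have : Real.exp (-(t * (Ψ ξ).re)) ≤ Real.exp (-(t * ‖ξ‖ ^ β)) :=
      Real.exp_le_exp.2 (neg_le_neg (mul_le_mul_of_nonneg_left (hgrowth ξ (not_le.1 hξ)) ht))
    have : 0 ≤ (Metric.closedBall 0 M).indicator (1 : E → ℝ) ξ := indicator_nonneg (by simp) ξ
    linarith

variable [NormedSpace ℝ E] [FiniteDimensional ℝ E] [MeasurableSpace E] [BorelSpace E]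
  (μ : Measure E) [μ.IsAddHaarMeasure]

theorem integrable_indicator_one_closedBall (x : E) (r : ℝ) :
    Integrable ((Metric.closedBall x r).indicator (1 : E → ℝ)) μ :=
  (integrable_indicator_iff measurableSet_closedBall).2
    (integrableOn_const measure_closedBall_lt_top.ne)

theorem integrable_cexp_neg_mul (hΨcont : Continuous Ψ) (hΨre : ∀ ξ, 0 ≤ (Ψ ξ).re)
    (hgrowth : ∀ ξ, M < ‖ξ‖ → ‖ξ‖ ^ β ≤ (Ψ ξ).re) (hβ : 0 < β) (ht : 0 < t) :
    Integrable (fun ξ => cexp (-(t : ℂ) * Ψ ξ)) μ :=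
  ((integrable_indicator_one_closedBall μ 0 M).add (integrable_exp_neg_mul_norm_rpow μ hβ ht)).mono'
    (by fun_prop) (.of_forall (norm_cexp_neg_mul_le hΨre hgrowth ht.le))

theorem integral_norm_cexp_neg_mul_le (hΨre : ∀ ξ, 0 ≤ (Ψ ξ).re)
    (hgrowth : ∀ ξ, M < ‖ξ‖ → ‖ξ‖ ^ β ≤ (Ψ ξ).re) (hβ : 0 < β) (ht : 0 < t) :
    ∫ ξ, ‖cexp (-(t : ℂ) * Ψ ξ)‖ ∂μ ≤
      μ.real (Metric.closedBall 0 M) +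
        t ^ (-(Module.finrank ℝ E / β)) * ∫ ξ, Real.exp (-‖ξ‖ ^ β) ∂μ := by
  have hball := integrable_indicator_one_closedBall μ 0 M
  have hexp := integrable_exp_neg_mul_norm_rpow μ hβ ht
  calc ∫ ξ, ‖cexp (-(t : ℂ) * Ψ ξ)‖ ∂μ
      ≤ ∫ ξ, ((Metric.closedBall 0 M).indicator 1 ξ + Real.exp (-(t * ‖ξ‖ ^ β))) ∂μ :=
        integral_mono_of_nonneg (.of_forall fun _ => norm_nonneg _) (hball.add hexp)
          (.of_forall (norm_cexp_neg_mul_le hΨre hgrowth ht.le))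
    _ = _ := by
        rw [integral_add hball hexp, integral_indicator_one measurableSet_closedBall,
          integral_exp_neg_mul_norm_rpow μ hβ.ne' ht]

end Domination

theorem norm_transDensity_le (n : ℕ) (Ψ : EuclideanSpace ℝ (Fin n) → ℂ) (t : ℝ)
    (x : EuclideanSpace ℝ (Fin n)) :
    ‖transDensity n Ψ t x‖ ≤ ((2 * Real.pi) ^ n)⁻¹ * ∫ ξ, ‖cexp (-(t : ℂ) * Ψ ξ)‖ := by
  rw [transDensity, norm_mul, Complex.norm_real, Real.norm_of_nonneg (by positivity)]
  gcongr
  refine (norm_integral_le_integral_norm _).trans_eq (integral_congr_ae (.of_forall fun ξ => ?_))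
  simp [Complex.norm_exp]

theorem stmt2_general (n : ℕ) (Ψ : EuclideanSpace ℝ (Fin n) → ℂ) (hΨcont : Continuous Ψ)
    (hΨre : ∀ ξ, 0 ≤ (Ψ ξ).re) (M β : ℝ) (hβ : β ∈ Set.Ioc (0 : ℝ) 2)
    (hgrowth : ∀ ξ : EuclideanSpace ℝ (Fin n), M < ‖ξ‖ → ‖ξ‖ ^ β ≤ (Ψ ξ).re) :
    (∀ t : ℝ, 0 < t →
      Integrable (fun ξ : EuclideanSpace ℝ (Fin n) => Complex.exp (-(t : ℂ) * Ψ ξ))) ∧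
    ∀ T : ℝ, 0 < T → ∃ C : ℝ, 0 < C ∧ ∀ t ∈ Set.Ioc (0 : ℝ) T,
      ∀ x : EuclideanSpace ℝ (Fin n),
        ‖transDensity n Ψ t x‖ ≤ C * t ^ (-((n : ℝ) / β)) := by
  refine ⟨fun t ht => integrable_cexp_neg_mul volume hΨcont hΨre hgrowth hβ.1 ht,
    fun T _ => ?_⟩
  set c : ℝ := ((2 * Real.pi) ^ n)⁻¹
  set V := volume.real (Metric.closedBall (0 : EuclideanSpace ℝ (Fin n)) M)
  set I := ∫ ξ : EuclideanSpace ℝ (Fin n), Real.exp (-‖ξ‖ ^ β)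
  have hI : 0 < I := integral_exp_pos (integrable_exp_neg_norm_rpow volume hβ.1)
  refine ⟨c * (V * T ^ ((n : ℝ) / β) + I), by positivity, fun t ⟨ht, htT⟩ x => ?_⟩
  have hV : V ≤ V * T ^ ((n : ℝ) / β) * t ^ (-((n : ℝ) / β)) := by
    rw [mul_assoc]
    exact le_mul_of_one_le_right measureReal_nonneg
      (one_le_rpow_mul_rpow_neg ht htT (div_nonneg n.cast_nonneg hβ.1.le))
  calc ‖transDensity n Ψ t x‖
      ≤ c * (V + t ^ (-((n : ℝ) / β)) * I) := by
        refine (norm_transDensity_le n Ψ t x).trans (mul_le_mul_of_nonneg_left ?_ (by positivity))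
        simpa using integral_norm_cexp_neg_mul_le volume hΨre hgrowth hβ.1 ht
    _ ≤ c * (V * T ^ ((n : ℝ) / β) + I) * t ^ (-((n : ℝ) / β)) := by
        rw [mul_assoc]
        gcongr
        linarith

theorem stmt2 (n : ℕ) (Ψ : EuclideanSpace ℝ (Fin n) → ℂ) (hΨcont : Continuous Ψ)
    (hΨre : ∀ ξ, 0 ≤ (Ψ ξ).re) (M β : ℝ) (hM : 0 < M) (hβ : β ∈ Set.Ioc (0 : ℝ) 2)
    (hgrowth : ∀ ξ : EuclideanSpace ℝ (Fin n), M < ‖ξ‖ → ‖ξ‖ ^ β ≤ (Ψ ξ).re) :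
    (∀ t : ℝ, 0 < t →
      Integrable (fun ξ : EuclideanSpace ℝ (Fin n) => Complex.exp (-(t : ℂ) * Ψ ξ))) ∧
    ∀ T : ℝ, 0 < T → ∃ C : ℝ, 0 < C ∧ ∀ t ∈ Set.Ioc (0 : ℝ) T,
      ∀ x : EuclideanSpace ℝ (Fin n),
        ‖transDensity n Ψ t x‖ ≤ C * t ^ (-((n : ℝ) / β)) :=
  stmt2_general n Ψ hΨcont hΨre M β hβ hgrowth
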